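/- Equivalently: there is no pair of positive integers (a, b) with (4a+1)(6a+2)(12a+1) = (4b-1)(6b-2)(12b-1). -/
import Mathlib


theorem stmt_8 :
    ¬ ∃ a b : ℤ, 0 < a ∧ 0 < b ∧
      (4*a+1)*(6*a+2)*(12*a+1) = (4*b-1)*(6*b-2)*(12*b-1) := by
  rintro ⟨a, b, ha, hb, h⟩
  rcases le_or_gt b a with hba | hab
  · nlinarith [mul_pos ha hb, mul_nonneg (sub_nonneg.mpr hba) (sub_nonneg.mpr hba),
      mul_nonneg (mul_nonneg (sub_nonneg.mpr hba) (sub_nonneg.mpr hba)) hb.le,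
      mul_nonneg (sub_nonneg.mpr hba) (mul_pos hb hb).le]
  · have hab' : a + 1 ≤ b := hab
    nlinarith [mul_pos ha hb, mul_nonneg (sub_nonneg.mpr hab') (sub_nonneg.mpr hab'),
      mul_nonneg (mul_nonneg (sub_nonneg.mpr hab') (sub_nonneg.mpr hab')) ha.le,
      mul_nonneg (sub_nonneg.mpr hab') (mul_pos ha ha).le]
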